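/- If f : [ℕ]² → ℕ is a 2-bounded coloring (every color is taken by at most 2 pairs) and X ⊆ ℕ is an infinite prerainbow for f, i.e. for all x, y ∈ X with x ≠ y there are only finitely many s ∈ X with f(x,s) = f(y,s), then there exists an infinite subset Y ⊆ X such that f is injective on [Y]², i.e. Y is a rainbow for f. -/
import Mathlib

open Classical Filter

noncomputable section

namespace Stmt0Aux

variable (f : ℕ → ℕ → ℕ) (X : Set ℕ)

/-- `s` is a good extension of the finite rainbow `F` above `n`. -/
def Good (F : Finset ℕ) (n s : ℕ) : Prop :=
  s ∈ X ∧ n < s ∧ (∀ x ∈ F, ∀ x' ∈ F, x ≠ x' → f x s ≠ f x' s) ∧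
    (∀ x ∈ F, ∀ x' ∈ F, ∀ y' ∈ F, x' < y' → f x s ≠ f x' y')

def Rainbow (F : Finset ℕ) : Prop :=
  ∀ x ∈ F, ∀ y ∈ F, ∀ x' ∈ F, ∀ y' ∈ F, x < y → x' < y' →
    f x y = f x' y' → x = x' ∧ y = y'

lemma fin_color (h2b : ∀ c : ℕ, {p : ℕ × ℕ | p.1 < p.2 ∧ f p.1 p.2 = c}.encard ≤ 2)
    (x c : ℕ) : {s : ℕ | f x s = c}.Finite := by
  have h1 : {s : ℕ | x < s ∧ f x s = c}.Finite := by
    have hfin : {p : ℕ × ℕ | p.1 < p.2 ∧ f p.1 p.2 = c}.Finite := by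
      rw [← Set.encard_ne_top_iff]
      intro h
      simpa [h] using h2b c
    have : {s : ℕ | x < s ∧ f x s = c} = (Prod.mk x) ⁻¹' {p : ℕ × ℕ | p.1 < p.2 ∧ f p.1 p.2 = c} := by
      ext s; simp
    rw [this]
    exact hfin.preimage (Function.Injective.injOn (fun a b h => by simpa using h))
  have : {s : ℕ | f x s = c} ⊆ Set.Iic x ∪ {s : ℕ | x < s ∧ f x s = c} := by
    intro s hs
    rcases le_or_gt s x with h | h
    · exact Or.inl h
    · exact Or.inr ⟨h, hs⟩
  exact ((Set.finite_Iic x).union h1).subset this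

lemma exists_good
    (h2b : ∀ c : ℕ, {p : ℕ × ℕ | p.1 < p.2 ∧ f p.1 p.2 = c}.encard ≤ 2)
    (hX : X.Infinite)
    (hpre : ∀ x ∈ X, ∀ y ∈ X, x ≠ y → {s ∈ X | f x s = f y s}.Finite)
    (F : Finset ℕ) (hF : ↑F ⊆ X) (n : ℕ) : ∃ s, Good f X F n s := by
  have hB1 : (⋃ x ∈ F, ⋃ x' ∈ F, {s ∈ X | x ≠ x' ∧ f x s = f x' s}).Finite := by
    refine F.finite_toSet.biUnion fun x hx => F.finite_toSet.biUnion fun x' hx' => ?_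
    by_cases h : x = x'
    · simp [h]
    · exact ((hpre x (hF hx) x' (hF hx') h).subset (by intro s hs; exact ⟨hs.1, hs.2.2⟩))
  have hB2 : (⋃ x ∈ F, ⋃ x' ∈ F, ⋃ y' ∈ F, {s : ℕ | f x s = f x' y'}).Finite := by
    refine F.finite_toSet.biUnion fun x hx => F.finite_toSet.biUnion fun x' hx' =>
      F.finite_toSet.biUnion fun y' hy' => fin_color f h2b x (f x' y')
  have hbig : (X \ (Set.Iic n ∪ (⋃ x ∈ F, ⋃ x' ∈ F, {s ∈ X | x ≠ x' ∧ f x s = f x' s}) ∪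
      (⋃ x ∈ F, ⋃ x' ∈ F, ⋃ y' ∈ F, {s : ℕ | f x s = f x' y'}))).Infinite :=
    hX.diff (((Set.finite_Iic n).union hB1).union hB2)
  obtain ⟨s, hsX, hs⟩ := hbig.nonempty
  simp only [Set.mem_union, not_or, Set.mem_Iic, not_le, Set.mem_iUnion, not_exists] at hs
  refine ⟨s, hsX, hs.1.1, ?_, ?_⟩
  · intro x hx x' hx' hne heq
    exact hs.1.2 x hx x' hx' ⟨hsX, hne, heq⟩
  · intro x hx x' hx' y' hy' hlt heq
    exact hs.2 x hx x' hx' y' hy' heq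

lemma rainbow_insert {F : Finset ℕ} {n s : ℕ} (hR : Rainbow f F)
    (hle : ∀ x ∈ F, x ≤ n) (hg : Good f X F n s) : Rainbow f (insert s F) := by
  obtain ⟨-, hns, hg3, hg4⟩ := hg
  have key : ∀ p ∈ insert s F, ∀ q ∈ insert s F, p < q → p ∈ F ∧ (q = s ∨ q ∈ F) := by
    intro p hp q hq hpq
    rcases Finset.mem_insert.1 hp with rfl | hpF
    · rcases Finset.mem_insert.1 hq with rfl | hqF
      · exact absurd hpq (lt_irrefl _)
      · exact absurd hpq (not_lt.2 ((hle q hqF).trans hns.le))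
    · exact ⟨hpF, Finset.mem_insert.1 hq⟩
  intro x hx y hy x' hx' y' hy' hxy hxy' heq
  obtain ⟨hxF, hy⟩ := key x hx y hy hxy
  obtain ⟨hxF', hy'⟩ := key x' hx' y' hy' hxy'
  rcases hy with rfl | hyF
  · rcases hy' with rfl | hyF'
    · by_cases h : x = x'
      · exact ⟨h, rfl⟩
      · exact absurd heq (hg3 x hxF x' hxF' h)
    · exact absurd heq (hg4 x hxF x' hxF' y' hyF' hxy')
  · rcases hy' with rfl | hyF'
    · exact absurd heq.symm (hg4 x' hxF' x hxF y hyF hxy)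
    · exact hR x hxF y hyF x' hxF' y' hyF' hxy hxy' heq

/-- Next element chosen by choice. -/
def next (F : Finset ℕ) (n : ℕ) : ℕ :=
  if h : ∃ s, Good f X F n s then h.choose else 0

lemma next_good {F : Finset ℕ} {n : ℕ} (h : ∃ s, Good f X F n s) :
    Good f X F n (next f X F n) := by
  rw [next, dif_pos h]; exact h.choose_spec

/-- The sequence: (last element, set so far). -/
def seq : ℕ → ℕ × Finset ℕ
  | 0 => (next f X ∅ 0, {next f X ∅ 0})
  | n + 1 =>
      let s := next f X (seq n).2 (seq n).1
      (s, insert s (seq n).2)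

end Stmt0Aux
section
namespace Stmt0Aux

variable (f : ℕ → ℕ → ℕ) (X : Set ℕ)
variable (h2b : ∀ c : ℕ, {p : ℕ × ℕ | p.1 < p.2 ∧ f p.1 p.2 = c}.encard ≤ 2)
  (hX : X.Infinite)
  (hpre : ∀ x ∈ X, ∀ y ∈ X, x ≠ y → {s ∈ X | f x s = f y s}.Finite)

include h2b hX hpre

lemma seq_inv : ∀ n : ℕ, ↑(seq f X n).2 ⊆ X ∧ (∀ x ∈ (seq f X n).2, x ≤ (seq f X n).1) ∧
    (seq f X n).1 ∈ (seq f X n).2 ∧ Rainbow f (seq f X n).2 := by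
  intro n
  induction n with
  | zero =>
      have hg : Good f X ∅ 0 (next f X ∅ 0) :=
        next_good f X (exists_good f X h2b hX hpre ∅ (by simp) 0)
      refine ⟨?_, ?_, ?_, ?_⟩
      · simp [seq, hg.1]
      · simp [seq]
      · simp [seq]
      · have : Rainbow f (insert (next f X ∅ 0) ∅) :=
          rainbow_insert f X (by intro x hx; simp at hx) (by simp) hg
        simpa [seq] using this
  | succ n ih =>
      obtain ⟨hsub, hle, hmem, hR⟩ := ih
      have hg : Good f X (seq f X n).2 (seq f X n).1
          (next f X (seq f X n).2 (seq f X n).1) :=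
        next_good f X (exists_good f X h2b hX hpre _ hsub _)
      refine ⟨?_, ?_, ?_, ?_⟩
      · simp only [seq]
        intro x hx
        rcases Finset.mem_insert.1 (by simpa using hx) with rfl | hxF
        · exact hg.1
        · exact hsub hxF
      · simp only [seq]
        intro x hx
        rcases Finset.mem_insert.1 hx with rfl | hxF
        · exact le_refl _
        · exact (hle x hxF).trans hg.2.1.le
      · simp [seq]
      · simpa [seq] using rainbow_insert f X hR hle hg

lemma seq_lt (n : ℕ) : (seq f X n).1 < (seq f X (n + 1)).1 := by
  have hg : Good f X (seq f X n).2 (seq f X n).1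
      (next f X (seq f X n).2 (seq f X n).1) :=
    next_good f X (exists_good f X h2b hX hpre _ (seq_inv f X h2b hX hpre n).1 _)
  simpa [seq] using hg.2.1

omit h2b hX hpre in
lemma seq_chain {m n : ℕ} (h : m ≤ n) : (seq f X m).2 ⊆ (seq f X n).2 := by
  induction n with
  | zero => simpa [Nat.le_zero.1 h]
  | succ n ih =>
      rcases Nat.lt_succ_iff_lt_or_eq.1 (Nat.lt_succ_of_le h) with h' | rfl
      · exact (ih (Nat.lt_succ_iff.1 h')).trans
          (by simp only [seq]; exact Finset.subset_insert _ _)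
      · exact Finset.Subset.refl _

end Stmt0Aux
end
/-- Every infinite prerainbow for a 2-bounded coloring of pairs contains
an infinite rainbow. -/
theorem stmt0 (f : ℕ → ℕ → ℕ)
    (h2b : ∀ c : ℕ, {p : ℕ × ℕ | p.1 < p.2 ∧ f p.1 p.2 = c}.encard ≤ 2)
    (X : Set ℕ) (hX : X.Infinite)
    (hpre : ∀ x ∈ X, ∀ y ∈ X, x ≠ y → {s ∈ X | f x s = f y s}.Finite) :
    ∃ Y ⊆ X, Y.Infinite ∧
      ∀ x ∈ Y, ∀ y ∈ Y, ∀ x' ∈ Y, ∀ y' ∈ Y, x < y → x' < y' →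
        f x y = f x' y' → x = x' ∧ y = y' := by
  set y : ℕ → ℕ := fun n => (Stmt0Aux.seq f X n).1 with hy
  have hmono : StrictMono y :=
    strictMono_nat_of_lt_succ fun n => Stmt0Aux.seq_lt f X h2b hX hpre n
  have hmem : ∀ {m N : ℕ}, m ≤ N → y m ∈ (Stmt0Aux.seq f X N).2 := fun {m N} hm =>
    Stmt0Aux.seq_chain f X hm (Stmt0Aux.seq_inv f X h2b hX hpre m).2.2.1
  refine ⟨Set.range y, ?_, Set.infinite_range_of_injective hmono.injective, ?_⟩
  · rintro _ ⟨n, rfl⟩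
    exact (Stmt0Aux.seq_inv f X h2b hX hpre n).1
      (Finset.mem_coe.2 (Stmt0Aux.seq_inv f X h2b hX hpre n).2.2.1)
  · rintro _ ⟨i, rfl⟩ _ ⟨j, rfl⟩ _ ⟨k, rfl⟩ _ ⟨l, rfl⟩ h1 h2 heq
    set N := max (max i j) (max k l) with hN
    exact (Stmt0Aux.seq_inv f X h2b hX hpre N).2.2.2
      (y i) (hmem (le_max_of_le_left (le_max_left _ _)))
      (y j) (hmem (le_max_of_le_left (le_max_right _ _)))
      (y k) (hmem (le_max_of_le_right (le_max_left _ _)))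
      (y l) (hmem (le_max_of_le_right (le_max_right _ _)))
      h1 h2 heq
end
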